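/- arXiv:1210.7844 — 4 statements merged into one kernel-verified Lean document; each statement's English description precedes it below -/
import Mathlib

section
/- (Generalized normalized Hoffman bound.) Let G be a finite simple graph on n vertices with no isolated vertices, at least one edge, and chromatic number χ. Then for every m with 1 ≤ m ≤ n: Σ_{i=1}^m μ_i* ≤ (χ − 1)·Σ_{i=1}^m (−μ*_{n+1−i}). -/
/-!
Fix a proper `χ`-colouring `c` and let `U = diag(ζ ^ c v)` with `ζ = exp(2πi/χ)`. Since `𝒜`
vanishes on colour classes, `∑_{j<χ} U^j 𝒜 U^{-j} = 0`, that is,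
`𝒜 = ∑_{j=1}^{χ-1} U^j (-𝒜) U^{-j}`. If `P` projects onto eigenvectors of the `m` largest
eigenvalues of `𝒜`, then `∑_{i≤m} μ*_i = tr(P𝒜) = ∑_j tr(P U^j (-𝒜) U^{-j})`, and by Ky Fan's
maximum principle each summand is at most the sum of the `m` largest eigenvalues of `-𝒜`.
-/

open Matrix Finset Unitary
open scoped MatrixOrder ComplexOrder

theorem Fin.sum_mul_le_sum_filter_lt_of_antitone {n m : ℕ} (hmn : m ≤ n) {ν : Fin n → ℝ}
    (hν : Antitone ν) {d : Fin n → ℝ} (hd0 : ∀ i, 0 ≤ d i) (hd1 : ∀ i, d i ≤ 1)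
    (hd : ∑ i, d i = m) :
    ∑ i, d i * ν i ≤ ∑ i ∈ univ.filter (fun i : Fin n => (i : ℕ) < m), ν i := by
  obtain rfl | hm := m.eq_zero_or_pos
  · have hd_zero : ∀ i, d i = 0 := by
      simpa using (sum_eq_zero_iff_of_nonneg fun i (_ : i ∈ univ) => hd0 i).1 (by exact_mod_cast hd)
    simp [hd_zero]
  set t := ν ⟨m - 1, by omega⟩
  have hterm : ∀ i : Fin n, 0 ≤ ((if (i : ℕ) < m then 1 else 0) - d i) * (ν i - t) := by
    intro i
    split_ifs
    · exact mul_nonneg (by linarith [hd1 i]) (sub_nonneg.2 (hν (Fin.le_def.2 (by simp; omega))))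
    · exact mul_nonneg_of_nonpos_of_nonpos (by linarith [hd0 i])
        (sub_nonpos.2 (hν (Fin.le_def.2 (by simp; omega))))
  have hsum : ∑ i : Fin n, ((if (i : ℕ) < m then 1 else 0) - d i) * (ν i - t)
      = ∑ i ∈ univ.filter (fun i : Fin n => (i : ℕ) < m), ν i - ∑ i, d i * ν i := by
    simp only [sub_mul, mul_sub, ite_mul, one_mul, zero_mul, sum_sub_distrib, ← sum_mul, hd,
      sum_ite, sum_const_zero, add_zero]
    simp [Fin.card_filter_val_lt, min_eq_right hmn]
  linarith [sum_nonneg fun i (_ : i ∈ univ) => hterm i]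

theorem Fin.sum_filter_lt_rev {M : Type*} [AddCommMonoid M] {n : ℕ} (m : ℕ) (f : Fin n → M) :
    ∑ i ∈ univ.filter (fun i : Fin n => (i : ℕ) < m), f i.rev =
      ∑ i ∈ univ.filter (fun i : Fin n => n - m ≤ (i : ℕ)), f i :=
  sum_equiv Fin.revPerm (fun i => by simp; omega) (fun _ _ => rfl)

theorem geom_sum_eq_zero_of_pow_eq_one {R : Type*} [Ring R] [NoZeroDivisors R] {z : R} {k : ℕ}
    (hz : z ^ k = 1) (hz1 : z ≠ 1) : ∑ j ∈ range k, z ^ j = 0 := by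
  have := geom_sum_mul z k
  rw [hz, sub_self] at this
  exact (mul_eq_zero.1 this).resolve_right (sub_ne_zero.2 hz1)

theorem IsPrimitiveRoot.mem_unitary {ζ : ℂ} {k : ℕ} (hζ : IsPrimitiveRoot ζ k) (hk : k ≠ 0) :
    ζ ∈ unitary ℂ := by
  rw [Unitary.mem_iff_star_mul_self, Complex.star_def, Complex.conj_mul', hζ.norm'_eq_one hk]
  simp

section Matrix

variable {ι : Type*} [Fintype ι] [DecidableEq ι]

theorem Matrix.diagonal_mem_unitary {R : Type*} [Semiring R] [StarRing R] {d : ι → R}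
    (hd : ∀ i, d i ∈ unitary R) : diagonal d ∈ unitary (Matrix ι ι R) := by
  simp [Unitary.mem_iff, star_eq_conjTranspose, diagonal_conjTranspose, diagonal_mul_diagonal,
    star_mul_self_of_mem (hd _), mul_star_self_of_mem (hd _)]

theorem Matrix.isStarProjection_diagonal_ite {R : Type*} [Semiring R] [StarRing R]
    (p : ι → Prop) [DecidablePred p] :
    IsStarProjection (diagonal fun i => if p i then (1 : R) else 0) := by
  refine ⟨?_, ?_⟩
  · rw [IsIdempotentElem, diagonal_mul_diagonal]
    congr 1 with i
    split_ifs <;> simp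
  · rw [IsSelfAdjoint, star_eq_conjTranspose, diagonal_conjTranspose]
    congr 1 with i
    rw [Pi.star_apply]
    split_ifs <;> simp

theorem Matrix.trace_conjStarAlgAut {R : Type*} [CommRing R] [StarRing R]
    (W : unitary (Matrix ι ι R)) (A : Matrix ι ι R) :
    (conjStarAlgAut R _ W A).trace = A.trace := by
  rw [conjStarAlgAut_apply, trace_mul_cycle, coe_star_mul_self, one_mul]

theorem Matrix.trace_mul_diagonal {R : Type*} [NonUnitalNonAssocSemiring R] (A : Matrix ι ι R)
    (d : ι → R) :
    (A * diagonal d).trace = ∑ i, A i i * d i := by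
  simp [trace, mul_diagonal]

theorem IsStarProjection.diag_mem_Icc {𝕜 : Type*} [RCLike 𝕜] {Q : Matrix ι ι 𝕜}
    (hQ : IsStarProjection Q) (i : ι) : Q i i ∈ Set.Icc 0 1 := by
  refine ⟨hQ.nonneg.posSemidef.diag_nonneg, ?_⟩
  simpa [sub_nonneg] using hQ.one_sub_nonneg.posSemidef.diag_nonneg (i := i)

def Matrix.ofRealStarMonoidHom (ι : Type*) [Fintype ι] [DecidableEq ι] :
    Matrix ι ι ℝ →⋆* Matrix ι ι ℂ where
  toFun A := A.map (↑)
  map_one' := Matrix.map_one _ Complex.ofReal_zero Complex.ofReal_one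
  map_mul' _ _ := Matrix.map_mul (f := Complex.ofRealHom)
  map_star' _ := by ext; simp [star_eq_conjTranspose]

@[simp]
theorem Matrix.ofRealStarMonoidHom_apply (A : Matrix ι ι ℝ) :
    ofRealStarMonoidHom ι A = A.map (↑) := rfl

theorem Matrix.IsHermitian.exists_unitary_map_ofReal_eq {N : Matrix ι ι ℝ} (hN : N.IsHermitian) :
    ∃ W : unitary (Matrix ι ι ℂ),
      N.map (↑) = conjStarAlgAut ℂ _ W (diagonal fun i => (hN.eigenvalues i : ℂ)) := by
  refine ⟨Unitary.map (ofRealStarMonoidHom ι) hN.eigenvectorUnitary, ?_⟩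
  refine (congrArg (ofRealStarMonoidHom ι) hN.spectral_theorem).trans ?_
  simp [map_mul, map_star]

/-- With `U = diag(ζ ^ c v)`, `ζ` a primitive `k`-th root of unity, the `(v, w)` entry of
`∑_{j<k} U^j A U^{-j}` is `A v w` times a full geometric sum of `ζ ^ (c v - c w)`, which vanishes
unless `c v = c w`. -/
theorem exists_unitary_eq_sum_conjStarAlgAut_pow_neg {k : ℕ} (c : ι → Fin k) {A : Matrix ι ι ℂ}
    (hA : ∀ v w, c v = c w → A v w = 0) :
    ∃ U : unitary (Matrix ι ι ℂ), A = ∑ j ∈ Ico 1 k, conjStarAlgAut ℂ _ (U ^ j) (-A) := by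
  rcases k.eq_zero_or_pos with rfl | hk
  · exact ⟨1, by ext v; exact (c v).elim0⟩
  obtain ⟨ζ, hζ⟩ : ∃ ζ : ℂ, IsPrimitiveRoot ζ k := ⟨_, Complex.isPrimitiveRoot_exp k hk.ne'⟩
  have hζU : ∀ a : ℕ, ζ ^ a ∈ unitary ℂ := fun a => pow_mem (hζ.mem_unitary hk.ne') a
  let U : unitary (Matrix ι ι ℂ) :=
    ⟨diagonal fun v => ζ ^ (c v : ℕ), diagonal_mem_unitary fun _ => hζU _⟩
  have hentry : ∀ j v w, conjStarAlgAut ℂ _ (U ^ j) A v w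
      = A v w * (ζ ^ (c v : ℕ) * star (ζ ^ (c w : ℕ))) ^ j := by
    intro j v w
    simp [U, diagonal_pow, star_eq_conjTranspose, diagonal_conjTranspose, mul_pow, star_pow]
    ring
  have hzero : ∑ j ∈ range k, conjStarAlgAut ℂ _ (U ^ j) A = 0 := by
    ext v w
    simp only [Matrix.sum_apply, hentry, ← mul_sum, Matrix.zero_apply]
    by_cases hc : c v = c w
    · rw [hA v w hc, zero_mul]
    refine mul_eq_zero_of_right _ (geom_sum_eq_zero_of_pow_eq_one ?_ ?_)
    · have hpow : ∀ a : ℕ, (ζ ^ a) ^ k = 1 := fun a => by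
        rw [← pow_mul, mul_comm, pow_mul, hζ.pow_eq_one, one_pow]
      rw [mul_pow, ← star_pow, hpow, hpow, star_one, one_mul]
    · intro h1
      have : ζ ^ (c v : ℕ) = ζ ^ (c w : ℕ) := by
        have := congrArg (· * ζ ^ (c w : ℕ)) h1
        rwa [mul_assoc, star_mul_self_of_mem (hζU _), mul_one, one_mul] at this
      exact hc (Fin.ext (hζ.pow_inj (c v).isLt (c w).isLt this))
  refine ⟨U, ?_⟩
  rw [range_eq_Ico, sum_eq_sum_Ico_succ_bot hk, pow_zero, map_one] at hzero
  simp only [map_neg, sum_neg_distrib]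
  exact eq_neg_of_add_eq_zero_left hzero

theorem SimpleGraph.Coloring.diagonal_mul_adjMatrix_mul_diagonal_apply_eq_zero {V α R : Type*}
    [Fintype V] [DecidableEq V] [Semiring R] {G : SimpleGraph V} [DecidableRel G.Adj]
    (c : G.Coloring α) (d : V → R) {v w : V} (h : c v = c w) :
    (diagonal d * G.adjMatrix R * diagonal d) v w = 0 := by
  have : ¬ G.Adj v w := fun hvw => c.valid hvw h
  rw [mul_diagonal, diagonal_mul]
  simp [this]

end Matrix

section KyFan

variable {𝕜 : Type*} [RCLike 𝕜] {n m : ℕ}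

theorem exists_isStarProjection_re_trace_mul_conjStarAlgAut_diagonal_eq (hmn : m ≤ n)
    (W : unitary (Matrix (Fin n) (Fin n) 𝕜)) (μ : Fin n → ℝ) (σ : Equiv.Perm (Fin n)) :
    ∃ P : Matrix (Fin n) (Fin n) 𝕜, IsStarProjection P ∧ P.trace = m ∧
      RCLike.re (P * conjStarAlgAut 𝕜 _ W (diagonal fun i => (μ (σ i) : 𝕜))).trace =
        ∑ i ∈ univ.filter (fun i : Fin n => (i : ℕ) < m), μ i := by
  refine ⟨conjStarAlgAut 𝕜 _ W (diagonal fun i => if (σ i : ℕ) < m then 1 else 0),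
    (isStarProjection_diagonal_ite _).map _, ?_, ?_⟩
  · rw [trace_conjStarAlgAut, trace_diagonal,
      Equiv.sum_comp σ fun i => if (i : ℕ) < m then (1 : 𝕜) else 0]
    simp [Fin.card_filter_val_lt, hmn]
  · rw [← map_mul, trace_conjStarAlgAut, diagonal_mul_diagonal, trace_diagonal, map_sum,
      sum_filter, ← Equiv.sum_comp σ (fun i => if (i : ℕ) < m then μ i else 0)]
    simp [apply_ite]

/-- Ky Fan's maximum principle: the diagonal of `W⋆ P W` is a weight vector in `[0, 1]` summing
to `m`. -/
theorem IsStarProjection.re_trace_mul_conjStarAlgAut_diagonal_le (hmn : m ≤ n)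
    {P : Matrix (Fin n) (Fin n) 𝕜} (hP : IsStarProjection P) (hPm : P.trace = m)
    (W : unitary (Matrix (Fin n) (Fin n) 𝕜)) {ν : Fin n → ℝ} (hν : Antitone ν)
    (σ : Equiv.Perm (Fin n)) :
    RCLike.re (P * conjStarAlgAut 𝕜 _ W (diagonal fun i => (ν (σ i) : 𝕜))).trace ≤
      ∑ i ∈ univ.filter (fun i : Fin n => (i : ℕ) < m), ν i := by
  set Q := conjStarAlgAut 𝕜 _ (star W) P
  have hQ : IsStarProjection Q := hP.map _
  have hQre : ∀ i, 0 ≤ RCLike.re (Q i i) ∧ RCLike.re (Q i i) ≤ 1 := fun i =>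
    ⟨by simpa using (RCLike.le_iff_re_im.1 (hQ.diag_mem_Icc i).1).1,
      by simpa using (RCLike.le_iff_re_im.1 (hQ.diag_mem_Icc i).2).1⟩
  have htrace : (P * conjStarAlgAut 𝕜 _ W (diagonal fun i => (ν (σ i) : 𝕜))).trace
      = (Q * diagonal fun i => (ν (σ i) : 𝕜)).trace := by
    simp only [Q, conjStarAlgAut_apply, coe_star, star_star]
    rw [← mul_assoc, ← mul_assoc, trace_mul_cycle, ← mul_assoc]
  rw [htrace, trace_mul_diagonal, map_sum, ← Equiv.sum_comp σ.symm]
  simp only [RCLike.re_mul_ofReal, Equiv.apply_symm_apply]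
  refine Fin.sum_mul_le_sum_filter_lt_of_antitone hmn hν (fun i => (hQre _).1)
    (fun i => (hQre _).2) ?_
  have hQm : RCLike.re Q.trace = m := by rw [trace_conjStarAlgAut, hPm, RCLike.natCast_re]
  rwa [Equiv.sum_comp σ.symm fun i => RCLike.re (Q i i), ← map_sum]

theorem IsStarProjection.re_trace_mul_neg_conjStarAlgAut_diagonal_le (hmn : m ≤ n)
    {P : Matrix (Fin n) (Fin n) 𝕜} (hP : IsStarProjection P) (hPm : P.trace = m)
    (W : unitary (Matrix (Fin n) (Fin n) 𝕜)) {μ : Fin n → ℝ} (hμ : Antitone μ)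
    (σ : Equiv.Perm (Fin n)) :
    RCLike.re (P * -conjStarAlgAut 𝕜 _ W (diagonal fun i => (μ (σ i) : 𝕜))).trace ≤
      ∑ i ∈ univ.filter (fun i : Fin n => n - m ≤ (i : ℕ)), -μ i := by
  have hneg : -conjStarAlgAut 𝕜 _ W (diagonal fun i => (μ (σ i) : 𝕜)) =
      conjStarAlgAut 𝕜 _ W (diagonal fun i => ((-μ ((σ.trans Fin.revPerm) i).rev : ℝ) : 𝕜)) := by
    rw [← map_neg, diagonal_neg]
    simp
  rw [hneg, ← Fin.sum_filter_lt_rev]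
  exact hP.re_trace_mul_conjStarAlgAut_diagonal_le hmn hPm W (Antitone.comp hμ Fin.rev_anti).neg _

end KyFan

theorem stmt_14_general {n : ℕ} (hn : 0 < n) (G : SimpleGraph (Fin n)) [DecidableRel G.Adj]
    (χ : ℕ) (hχ : G.chromaticNumber = (χ : ℕ∞))
    (N : Matrix (Fin n) (Fin n) ℝ)
    (hNdef : N = Matrix.diagonal (fun v => (Real.sqrt (G.degree v))⁻¹) * G.adjMatrix ℝ *
      Matrix.diagonal (fun v => (Real.sqrt (G.degree v))⁻¹))
    (hN : N.IsHermitian)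
    (μ : Fin n → ℝ) (hμa : Antitone μ)
    (hμ : ∃ e : Equiv.Perm (Fin n), μ = hN.eigenvalues ∘ e)
    (m : ℕ) (hmn : m ≤ n) :
    (∑ i ∈ Finset.univ.filter (fun i : Fin n => (i : ℕ) < m), μ i) ≤
      ((χ : ℝ) - 1) * (∑ i ∈ Finset.univ.filter (fun i : Fin n => n - m ≤ (i : ℕ)), -μ i) := by
  obtain ⟨e, rfl⟩ := hμ
  obtain ⟨c⟩ : G.Colorable χ := SimpleGraph.chromaticNumber_le_iff_colorable.mp hχ.le
  obtain ⟨W, hW⟩ := hN.exists_unitary_map_ofReal_eq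
  replace hW : N.map Complex.ofReal = conjStarAlgAut ℂ _ W
      (diagonal fun i => ((hN.eigenvalues ∘ e) (e.symm i) : ℂ)) := by simpa using hW
  obtain ⟨P, hP, hPm, htop⟩ := exists_isStarProjection_re_trace_mul_conjStarAlgAut_diagonal_eq
    hmn W (hN.eigenvalues ∘ e) e.symm
  obtain ⟨U, hU⟩ := exists_unitary_eq_sum_conjStarAlgAut_pow_neg c (A := N.map Complex.ofReal)
    fun v w h => by
      rw [map_apply, hNdef, c.diagonal_mul_adjMatrix_mul_diagonal_apply_eq_zero _ h,
        Complex.ofReal_zero]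
  calc ∑ i ∈ univ.filter (fun i : Fin n => (i : ℕ) < m), (hN.eigenvalues ∘ e) i
      = RCLike.re (P * N.map Complex.ofReal).trace := by rw [hW]; exact htop.symm
    _ = ∑ j ∈ Ico 1 χ,
        RCLike.re (P * conjStarAlgAut ℂ _ (U ^ j) (-N.map Complex.ofReal)).trace := by
      conv_lhs => rw [hU]
      rw [mul_sum, trace_sum, map_sum]
    _ ≤ ∑ j ∈ Ico 1 χ, ∑ i ∈ univ.filter (fun i : Fin n => n - m ≤ (i : ℕ)),
        -(hN.eigenvalues ∘ e) i := sum_le_sum fun j _ => by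
      rw [hW, map_neg, ← conjStarAlgAut_mul_apply]
      exact hP.re_trace_mul_neg_conjStarAlgAut_diagonal_le hmn hPm _ hμa _
    _ = _ := by simp [Fin.pos (c ⟨0, hn⟩)]

/-- **Generalized normalized Hoffman bound.** Let `G` be a finite simple graph on `n` vertices
with no isolated vertices, at least one edge, and chromatic number `χ`.  Let
`𝒜 = D^{-1/2} A D^{-1/2}` be the normalized adjacency matrix, with non-increasing
eigenvalue enumeration `μ*`.  Then for every `1 ≤ m ≤ n`:
`Σ_{i=1}^m μ*_i ≤ (χ - 1)·Σ_{i=1}^m (-μ*_{n+1-i})`, where the top `m` eigenvalues are those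
with index `< m` and the bottom `m` are those with index `≥ n - m`. -/
theorem stmt_14 {n : ℕ} (hn : 0 < n) (G : SimpleGraph (Fin n)) [DecidableRel G.Adj]
    (hdeg : ∀ v : Fin n, 0 < G.degree v)
    (he : ∃ v w : Fin n, G.Adj v w)
    (χ : ℕ) (hχ : G.chromaticNumber = (χ : ℕ∞))
    (N : Matrix (Fin n) (Fin n) ℝ)
    (hNdef : N = Matrix.diagonal (fun v => (Real.sqrt (G.degree v))⁻¹) * G.adjMatrix ℝ *
      Matrix.diagonal (fun v => (Real.sqrt (G.degree v))⁻¹))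
    (hN : N.IsHermitian)
    (μ : Fin n → ℝ) (hμa : Antitone μ)
    (hμ : ∃ e : Equiv.Perm (Fin n), μ = hN.eigenvalues ∘ e)
    (m : ℕ) (hm1 : 1 ≤ m) (hmn : m ≤ n) :
    (∑ i ∈ Finset.univ.filter (fun i : Fin n => (i : ℕ) < m), μ i) ≤
      ((χ : ℝ) - 1) * (∑ i ∈ Finset.univ.filter (fun i : Fin n => n - m ≤ (i : ℕ)), -μ i) :=
  stmt_14_general hn G χ hχ N hNdef hN μ hμa hμ m hmn
end

section
/- (Conversion of the adjacency matrix.) Let c ≥ 1 be an integer and let A ∈ ℂ^{n×n} be a Hermitian matrix that is colorable with c colors. Then there exist c diagonal unitary matrices U_1, …, U_c ∈ ℂ^{n×n}, each of whose diagonal entries is a c-th root of unity, such that Σ_{s=1}^{c} U_s† A U_s = 0; moreover one may take U_c to be the identity matrix. -/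
open Matrix Finset

/-!
Let `ζ` be a primitive `c`-th root of unity and `f` a colouring. Take `U_s` diagonal with entries
`ζ ^ (s * f k)` for `s = 1, …, c`, so that `U_c = 1`. The `(k, l)` entry of `Σ_s U_sᴴ A U_s` is
`A k l * Σ_s z ^ s` with `z = ζ ^ (f l - f k)`. If `k` and `l` have the same colour then
`A k l = 0`; otherwise `z ≠ 1` is a `c`-th root of unity and the geometric sum vanishes.
-/

theorem sum_pow_succ_eq_zero_of_pow_eq_one {R : Type*} [CommRing R] [IsDomain R] {z : R}
    {c : ℕ} (hz : z ^ c = 1) (hz1 : z ≠ 1) : ∑ s : Fin c, z ^ (s.val + 1) = 0 := by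
  have hgeom : ∑ i ∈ range c, z ^ i = 0 := by
    have h := mul_geom_sum z c
    rw [hz, sub_self] at h
    exact (mul_eq_zero.1 h).resolve_left (sub_ne_zero.2 hz1)
  simp_rw [Fin.sum_univ_eq_sum_range (fun i => z ^ (i + 1)), pow_succ', ← mul_sum, hgeom,
    mul_zero]

namespace Matrix

variable {ι n α : Type*} [Fintype n] [DecidableEq n]

theorem diagonal_conjTranspose_mul_mul_diagonal_apply [Semiring α] [StarRing α]
    (u v : n → α) (A : Matrix n n α) (k l : n) :
    ((diagonal u)ᴴ * A * diagonal v) k l = star (u k) * A k l * v l := by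
  rw [diagonal_conjTranspose, mul_diagonal, diagonal_mul, Pi.star_apply]

theorem sum_diagonal_conjTranspose_mul_mul_diagonal_eq_zero [Fintype ι] [CommSemiring α]
    [StarRing α] (u : ι → n → α) (A : Matrix n n α)
    (h : ∀ k l, A k l = 0 ∨ ∑ s, star (u s k) * u s l = 0) :
    ∑ s, (diagonal (u s))ᴴ * A * diagonal (u s) = 0 := by
  ext k l
  have hfactor : ∑ s, star (u s k) * A k l * u s l = A k l * ∑ s, star (u s k) * u s l := by
    rw [mul_sum]
    exact sum_congr rfl fun s _ => by ring
  simp only [sum_apply, diagonal_conjTranspose_mul_mul_diagonal_apply, zero_apply, hfactor]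
  rcases h k l with h | h <;> simp [h]

theorem diagonal_mem_unitaryGroup [CommRing α] [StarRing α] {u : n → α}
    (h : ∀ k, star (u k) * u k = 1) : diagonal u ∈ unitaryGroup n α := by
  rw [mem_unitaryGroup_iff', star_eq_conjTranspose, diagonal_conjTranspose,
    diagonal_mul_diagonal, ← diagonal_one]
  exact congrArg diagonal (funext h)

end Matrix

section ColorPhase

variable {K ι : Type*} [Field K] {c : ℕ} {ζ : K} {f : ι → Fin c}

-- `s : Fin c` plays the role of the paper's index `s + 1 ∈ {1, …, c}`.
def colorPhase (ζ : K) (f : ι → Fin c) (s : Fin c) (k : ι) : K :=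
  ζ ^ ((s.val + 1) * (f k).val)

theorem colorPhase_pow_eq_one (hζ : ζ ^ c = 1) (s : Fin c) (k : ι) :
    colorPhase ζ f s k ^ c = 1 := by
  rw [colorPhase, ← pow_mul, mul_comm, pow_mul, hζ, one_pow]

theorem colorPhase_last (hc : 0 < c) (hζ : ζ ^ c = 1) :
    colorPhase ζ f ⟨c - 1, Nat.sub_one_lt_of_lt hc⟩ = 1 := by
  funext k
  rw [colorPhase, Nat.sub_add_cancel hc, pow_mul, hζ, one_pow, Pi.one_apply]

theorem star_colorPhase_mul [StarRing K] (hstar : star ζ = ζ⁻¹) (s : Fin c) (k l : ι) :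
    star (colorPhase ζ f s k) * colorPhase ζ f s l =
      (ζ ^ (f l).val / ζ ^ (f k).val) ^ (s.val + 1) := by
  rw [colorPhase, colorPhase, star_pow, hstar, inv_pow, div_pow, ← pow_mul, ← pow_mul,
    mul_comm (f k).val, mul_comm (f l).val, div_eq_inv_mul]

theorem star_colorPhase_mul_self [StarRing K] (hζ : ζ ≠ 0) (hstar : star ζ = ζ⁻¹) (s : Fin c) (k : ι) :
    star (colorPhase ζ f s k) * colorPhase ζ f s k = 1 := by
  rw [star_colorPhase_mul hstar, div_self (pow_ne_zero _ hζ), one_pow]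

theorem sum_star_colorPhase_mul_eq_zero [StarRing K] (hζ : IsPrimitiveRoot ζ c) (hstar : star ζ = ζ⁻¹)
    {k l : ι} (hkl : f k ≠ f l) :
    ∑ s, star (colorPhase ζ f s k) * colorPhase ζ f s l = 0 := by
  simp_rw [star_colorPhase_mul hstar]
  apply sum_pow_succ_eq_zero_of_pow_eq_one
  · rw [div_pow, ← pow_mul, ← pow_mul, mul_comm (f k).val, mul_comm (f l).val, pow_mul,
      pow_mul, hζ.pow_eq_one, one_pow, one_pow, div_one]
  · intro h
    have hne : ζ ^ (f k).val ≠ 0 := pow_ne_zero _ (hζ.ne_zero (Fin.pos (f k)).ne')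
    exact hkl (Fin.ext (hζ.pow_inj (f l).isLt (f k).isLt ((div_eq_one_iff_eq hne).1 h))).symm

end ColorPhase

/-- **Conversion of the adjacency matrix.** If the Hermitian matrix `A ∈ ℂ^{n×n}` is colorable
with `c ≥ 1` colors, then there exist `c` diagonal unitary matrices `U_1, …, U_c`, each of
whose diagonal entries is a `c`-th root of unity, such that `Σ_s U_s† A U_s = 0`; moreover
one may take the last one, `U_c`, to be the identity matrix. -/
theorem stmt_15 {n c : ℕ} (hc : 1 ≤ c)
    (A : Matrix (Fin n) (Fin n) ℂ)
    (f : Fin n → Fin c) (hf : ∀ k l : Fin n, f k = f l → A k l = 0) :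
    ∃ U : Fin c → Matrix (Fin n) (Fin n) ℂ,
      (∀ s : Fin c, ∃ u : Fin n → ℂ, U s = Matrix.diagonal u ∧ ∀ k : Fin n, (u k) ^ c = 1) ∧
      (∀ s : Fin c, U s ∈ Matrix.unitaryGroup (Fin n) ℂ) ∧
      (∑ s : Fin c, (U s)ᴴ * A * U s) = 0 ∧
      U ⟨c - 1, by omega⟩ = 1 := by
  set ζ : ℂ := Complex.exp (2 * Real.pi * Complex.I / c)
  have hζ : IsPrimitiveRoot ζ c := Complex.isPrimitiveRoot_exp c (by omega)
  have hstar : star ζ = ζ⁻¹ := (Complex.inv_eq_conj (hζ.norm'_eq_one (by omega))).symm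
  refine ⟨fun s => diagonal (colorPhase ζ f s),
    fun s => ⟨_, rfl, colorPhase_pow_eq_one hζ.pow_eq_one s⟩,
    fun s => diagonal_mem_unitaryGroup
      (star_colorPhase_mul_self (hζ.ne_zero (by omega)) hstar s),
    sum_diagonal_conjTranspose_mul_mul_diagonal_eq_zero _ A fun k l => ?_, ?_⟩
  · by_cases hkl : f k = f l
    · exact Or.inl (hf k l hkl)
    · exact Or.inr (sum_star_colorPhase_mul_eq_zero hζ hstar hkl)
  · exact (congrArg diagonal (colorPhase_last hc hζ.pow_eq_one)).trans diagonal_one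
end

section
/- Let c ≥ 2 be an integer, let P_1,…,P_c ∈ ℂ^{n×n} be orthogonal projectors with Σ_{a=1}^c P_a = I, and let 𝒞 be the corresponding pinching operator. Then for every Hermitian matrix X ∈ ℂ^{n×n} and every m with 1 ≤ m ≤ n: Σ_{i=1}^m λ_i↓(X) ≥ Σ_{i=1}^m λ_i↓((c/(c−1))·𝒞(X) − (1/(c−1))·X). -/
/-!
With `ζ` a primitive `c`-th root of unity, the unitaries `U k = ∑ a, ζ ^ (a * k) • P a` satisfy
`∑ k, U k * X * (U k)ᴴ = c • 𝒞(X)` and `U 0 = 1`, so `(c/(c-1)) • 𝒞(X) - (c-1)⁻¹ • X` is the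
uniform average of the `c - 1` conjugates `U k * X * (U k)ᴴ`, `k ≠ 0`.
By Ky Fan's maximum principle, the sum of the `m` largest eigenvalues of a Hermitian `X` is the
maximum of `re (tr (Q * X))` over `0 ≤ Q ≤ 1` with `tr Q = m`. This is a convex and unitarily
invariant function of `X`, so it cannot increase under averaging unitary conjugates of `X`.
-/

open Matrix Finset
open scoped ComplexOrder

theorem sum_mul_le_sum_filter_lt {n m : ℕ} (hm1 : 1 ≤ m) (hmn : m ≤ n) {μ s : Fin n → ℝ}
    (hμ : Antitone μ) (hs0 : ∀ i, 0 ≤ s i) (hs1 : ∀ i, s i ≤ 1) (hsum : ∑ i, s i = m) :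
    ∑ i, s i * μ i ≤ ∑ i ∈ univ.filter (fun i : Fin n => (i : ℕ) < m), μ i := by
  set t : Fin n → ℝ := fun i => if (i : ℕ) < m then 1 else 0
  set θ := μ ⟨m - 1, by omega⟩
  have ht : ∑ i, t i = m := by
    simp [t, Finset.sum_boole, Fin.card_filter_val_lt, hmn]
  -- `θ` separates the `m` largest values of `μ` from the others
  have hpt : ∀ i, (s i - t i) * (μ i - θ) ≤ 0 := fun i => by
    by_cases hi : (i : ℕ) < m
    · have : θ ≤ μ i := hμ (Fin.le_def.mpr (by simp; omega))
      simp only [t, if_pos hi]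
      nlinarith [hs1 i]
    · have : μ i ≤ θ := hμ (Fin.le_def.mpr (by simp; omega))
      simp only [t, if_neg hi]
      nlinarith [hs0 i]
  have hrhs : ∑ i ∈ univ.filter (fun i : Fin n => (i : ℕ) < m), μ i = ∑ i, t i * μ i := by
    simp [t, Finset.sum_filter]
  have key : ∑ i, s i * μ i - ∑ i, t i * μ i =
      ∑ i, (s i - t i) * (μ i - θ) + θ * (∑ i, s i - ∑ i, t i) := by
    rw [mul_sub, Finset.mul_sum, Finset.mul_sum, ← Finset.sum_sub_distrib,
      ← Finset.sum_sub_distrib, ← Finset.sum_add_distrib]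
    exact Finset.sum_congr rfl fun i _ => by ring
  rw [hsum, ht, sub_self, mul_zero, add_zero] at key
  linarith [Finset.sum_nonpos fun i (_ : i ∈ univ) => hpt i]

namespace Matrix

/-- The convex hull of the rank-`m` orthogonal projections. -/
def fractionalProjections (n : Type*) [Fintype n] [DecidableEq n] (m : ℕ) :
    Set (Matrix n n ℂ) :=
  {Q | Q.PosSemidef ∧ (1 - Q).PosSemidef ∧ Q.trace = m}

variable {n : Type*} [Fintype n] [DecidableEq n]

theorem star_mul_mul_mem_fractionalProjections {m : ℕ} {Q U : Matrix n n ℂ}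
    (hQ : Q ∈ fractionalProjections n m) (hU : U ∈ unitaryGroup n ℂ) :
    star U * Q * U ∈ fractionalProjections n m := by
  obtain ⟨hQ0, hQ1, hQtr⟩ := hQ
  refine ⟨hQ0.conjTranspose_mul_mul_same U, ?_, ?_⟩
  · have : 1 - star U * Q * U = star U * (1 - Q) * U := by
      rw [mul_sub, sub_mul, mul_one, Unitary.star_mul_self_of_mem hU]
    rw [this]
    exact hQ1.conjTranspose_mul_mul_same U
  · rw [trace_mul_cycle, Unitary.mul_star_self_of_mem hU, one_mul, hQtr]

theorem IsHermitian.trace_mul_eq_sum_diag_mul_eigenvalues {X : Matrix n n ℂ}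
    (hX : X.IsHermitian) (Q : Matrix n n ℂ) :
    (Q * X).trace =
      ∑ j, (star (hX.eigenvectorUnitary : Matrix n n ℂ) * Q * hX.eigenvectorUnitary) j j *
        hX.eigenvalues j := by
  set V : Matrix n n ℂ := ↑hX.eigenvectorUnitary
  have hD : star V * X * V = diagonal (RCLike.ofReal ∘ hX.eigenvalues) := by
    simpa using hX.conjStarAlgAut_star_eigenvectorUnitary
  have hVV : V * star V = 1 := Unitary.mul_star_self_of_mem hX.eigenvectorUnitary.2
  calc (Q * X).trace = (star V * Q * V * (star V * X * V)).trace := by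
        rw [show star V * Q * V * (star V * X * V) = star V * (Q * (V * star V) * X) * V by
          simp only [mul_assoc], hVV, mul_one, trace_mul_cycle, hVV, one_mul]
    _ = _ := by rw [hD]; simp [trace, mul_diagonal]

end Matrix

namespace Matrix.IsHermitian

variable {n m : ℕ} {X : Matrix (Fin n) (Fin n) ℂ} {μ : Fin n → ℝ}

theorem re_trace_mul_le_sum_filter_lt (hX : X.IsHermitian) (hμa : Antitone μ)
    (hμ : ∃ e : Equiv.Perm (Fin n), μ = hX.eigenvalues ∘ e) (hm1 : 1 ≤ m) (hmn : m ≤ n)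
    {Q : Matrix (Fin n) (Fin n) ℂ} (hQ : Q ∈ fractionalProjections (Fin n) m) :
    (Q * X).trace.re ≤ ∑ i ∈ univ.filter (fun i : Fin n => (i : ℕ) < m), μ i := by
  obtain ⟨e, rfl⟩ := hμ
  obtain ⟨hR0, hR1, hRtr⟩ :=
    star_mul_mul_mem_fractionalProjections hQ hX.eigenvectorUnitary.2
  set R := star (hX.eigenvectorUnitary : Matrix (Fin n) (Fin n) ℂ) * Q * hX.eigenvectorUnitary
  have hs0 : ∀ j, 0 ≤ (R j j).re := fun j => (Complex.nonneg_iff.mp hR0.diag_nonneg).1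
  have hs1 : ∀ j, (R j j).re ≤ 1 := fun j => by
    simpa [one_apply_eq] using (Complex.nonneg_iff.mp (hR1.diag_nonneg (i := j))).1
  have hsum : ∑ j, (R j j).re = m := by
    simpa [trace, Complex.re_sum] using congrArg Complex.re hRtr
  rw [hX.trace_mul_eq_sum_diag_mul_eigenvalues, Complex.re_sum]
  simp only [Complex.re_mul_ofReal]
  rw [← Equiv.sum_comp e]
  exact sum_mul_le_sum_filter_lt hm1 hmn hμa (fun i => hs0 (e i)) (fun i => hs1 (e i))
    (by rw [Equiv.sum_comp e (fun j => (R j j).re), hsum])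

theorem exists_mem_fractionalProjections_re_trace_mul_eq (hX : X.IsHermitian)
    (hμ : ∃ e : Equiv.Perm (Fin n), μ = hX.eigenvalues ∘ e) (hmn : m ≤ n) :
    ∃ Q ∈ fractionalProjections (Fin n) m,
      (Q * X).trace.re = ∑ i ∈ univ.filter (fun i : Fin n => (i : ℕ) < m), μ i := by
  obtain ⟨e, rfl⟩ := hμ
  set V : Matrix (Fin n) (Fin n) ℂ := ↑hX.eigenvectorUnitary
  have hVV : star V * V = 1 := Unitary.star_mul_self_of_mem hX.eigenvectorUnitary.2
  -- the spectral projection onto the eigenvectors of the `m` largest eigenvalues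
  set d : Fin n → ℂ := fun j => if ((e.symm j : Fin n) : ℕ) < m then 1 else 0
  have hd : ∀ j, 0 ≤ d j ∧ d j ≤ 1 := fun j => by
    by_cases h : ((e.symm j : Fin n) : ℕ) < m <;> simp [d, h]
  have hD : diagonal d ∈ fractionalProjections (Fin n) m := by
    refine ⟨posSemidef_diagonal_iff.mpr fun j => (hd j).1, ?_, ?_⟩
    · rw [← diagonal_one, diagonal_sub]
      exact posSemidef_diagonal_iff.mpr fun j => sub_nonneg.mpr (hd j).2
    · rw [trace_diagonal, ← Equiv.sum_comp e]
      simp [d, Finset.sum_boole, Fin.card_filter_val_lt, hmn]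
  refine ⟨V * diagonal d * star V, ?_, ?_⟩
  · simpa using star_mul_mul_mem_fractionalProjections hD (star hX.eigenvectorUnitary).2
  · rw [hX.trace_mul_eq_sum_diag_mul_eigenvalues, Complex.re_sum,
      show star V * (V * diagonal d * star V) * V = diagonal d by
        simp only [← mul_assoc, hVV, one_mul]; rw [mul_assoc, hVV, mul_one],
      ← Equiv.sum_comp e, Finset.sum_filter]
    refine Finset.sum_congr rfl fun i _ => ?_
    by_cases h : (i : ℕ) < m <;> simp [d, h]

end Matrix.IsHermitian

theorem sum_filter_lt_le_of_eq_sum_smul_unitary_conj {n m : ℕ}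
    {X Y : Matrix (Fin n) (Fin n) ℂ} (hX : X.IsHermitian) (hY : Y.IsHermitian) {μ ν : Fin n → ℝ}
    (hμa : Antitone μ) (hμ : ∃ e : Equiv.Perm (Fin n), μ = hX.eigenvalues ∘ e)
    (hν : ∃ e : Equiv.Perm (Fin n), ν = hY.eigenvalues ∘ e) (hm1 : 1 ≤ m) (hmn : m ≤ n)
    {ι : Type*} (s : Finset ι) (w : ι → ℝ) (hw0 : ∀ k ∈ s, 0 ≤ w k) (hw1 : ∑ k ∈ s, w k = 1)
    (U : ι → Matrix (Fin n) (Fin n) ℂ) (hU : ∀ k ∈ s, U k ∈ unitaryGroup (Fin n) ℂ)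
    (hXY : Y = ∑ k ∈ s, w k • (U k * X * star (U k))) :
    ∑ i ∈ univ.filter (fun i : Fin n => (i : ℕ) < m), ν i ≤
      ∑ i ∈ univ.filter (fun i : Fin n => (i : ℕ) < m), μ i := by
  obtain ⟨Q, hQ, hQY⟩ := hY.exists_mem_fractionalProjections_re_trace_mul_eq hν hmn
  have hconj : ∀ k ∈ s, (Q * (U k * X * star (U k))).trace.re ≤
      ∑ i ∈ univ.filter (fun i : Fin n => (i : ℕ) < m), μ i := fun k hk => by
    rw [show Q * (U k * X * star (U k)) = Q * U k * X * star (U k) by simp only [mul_assoc],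
      trace_mul_cycle, ← mul_assoc]
    exact hX.re_trace_mul_le_sum_filter_lt hμa hμ hm1 hmn
      (star_mul_mul_mem_fractionalProjections hQ (hU k hk))
  calc ∑ i ∈ univ.filter (fun i : Fin n => (i : ℕ) < m), ν i
      = ∑ k ∈ s, w k * (Q * (U k * X * star (U k))).trace.re := by
        rw [← hQY, hXY, Finset.mul_sum, trace_sum, Complex.re_sum]
        simp [trace_smul]
    _ ≤ ∑ k ∈ s, w k * ∑ i ∈ univ.filter (fun i : Fin n => (i : ℕ) < m), μ i :=
        Finset.sum_le_sum fun k hk => mul_le_mul_of_nonneg_left (hconj k hk) (hw0 k hk)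
    _ = _ := by rw [← Finset.sum_mul, hw1, one_mul]

theorem IsPrimitiveRoot.sum_pow_mul_star_pow {ζ : ℂ} {c : ℕ} (hζ : IsPrimitiveRoot ζ c)
    (a b : Fin c) :
    ∑ k : Fin c, ζ ^ ((a : ℕ) * k) * star (ζ ^ ((b : ℕ) * k)) = if a = b then (c : ℂ) else 0 := by
  have hc : c ≠ 0 := a.pos.ne'
  have hnorm : ∀ j : ℕ, ζ ^ j * star (ζ ^ j) = 1 := fun j => by
    rw [Complex.star_def, Complex.mul_conj', norm_pow,
      Complex.norm_eq_one_of_pow_eq_one hζ.pow_eq_one hc]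
    simp
  set x := ζ ^ (a : ℕ) * star (ζ ^ (b : ℕ))
  have hterm : ∀ k : ℕ, ζ ^ ((a : ℕ) * k) * star (ζ ^ ((b : ℕ) * k)) = x ^ k := fun k => by
    rw [pow_mul, pow_mul, star_pow, mul_pow]
  simp only [hterm]
  rw [Fin.sum_univ_eq_sum_range (x ^ ·) c]
  split_ifs with hab
  · have hx : x = 1 := by subst hab; exact hnorm a
    simp [hx]
  · have hxc : x ^ c = 1 := by
      rw [← hterm c, mul_comm _ c, mul_comm _ c, pow_mul, pow_mul, hζ.pow_eq_one]
      simp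
    have hx1 : x ≠ 1 := fun h => hab <| Fin.ext <| hζ.pow_inj a.isLt b.isLt <|
      calc ζ ^ (a : ℕ) = x * ζ ^ (b : ℕ) := by rw [mul_assoc, mul_comm (star _), hnorm, mul_one]
        _ = ζ ^ (b : ℕ) := by rw [h, one_mul]
    rw [geom_sum_eq hx1, hxc, sub_self, zero_div]

namespace Matrix

variable {n ι : Type*}

theorem mul_eq_zero_of_sum_eq_one [Fintype n] [DecidableEq n] [Fintype ι] [DecidableEq ι]
    {P : ι → Matrix n n ℂ} (hP1 : ∀ a, (P a)ᴴ = P a) (hP2 : ∀ a, P a * P a = P a)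
    (hPsum : ∑ a, P a = 1) {a b : ι} (hab : a ≠ b) : P a * P b = 0 := by
  have hsq : ∀ b, (P b * P a)ᴴ * (P b * P a) = P a * P b * P a := fun b => by
    rw [conjTranspose_mul, hP1, hP1, mul_assoc, ← mul_assoc (P b), hP2, mul_assoc]
  have hsum : ∑ b ∈ univ.erase a, P a * P b * P a = 0 := by
    rw [Finset.sum_erase_eq_sub (mem_univ a), ← Finset.sum_mul, ← Finset.mul_sum, hPsum,
      mul_one, hP2, hP2, sub_self]
  have htr : ∑ b ∈ univ.erase a, ((P b * P a)ᴴ * (P b * P a)).trace = 0 := by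
    simp only [hsq]
    rw [← trace_sum, hsum, trace_zero]
  have hba := (Finset.sum_eq_zero_iff_of_nonneg fun b _ =>
    (posSemidef_conjTranspose_mul_self (P b * P a)).trace_nonneg).mp htr b
    (mem_erase.mpr ⟨hab.symm, mem_univ b⟩)
  rw [trace_conjTranspose_mul_self_eq_zero_iff] at hba
  simpa [hP1] using congrArg conjTranspose hba

theorem sum_smul_mul_mul_sum_smul [Fintype n] [Fintype ι] (z w : ι → ℂ) (P : ι → Matrix n n ℂ)
    (M : Matrix n n ℂ) :
    (∑ a, z a • P a) * M * (∑ b, w b • P b) = ∑ a, ∑ b, (z a * w b) • (P a * M * P b) := by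
  simp only [Finset.sum_mul, Finset.mul_sum, smul_mul_assoc, mul_smul_comm, Finset.smul_sum,
    smul_smul]
  rw [Finset.sum_comm]
  simp_rw [mul_comm (w _)]

variable {c : ℕ}

def pinchingUnitary (ζ : ℂ) (P : Fin c → Matrix n n ℂ) (k : Fin c) : Matrix n n ℂ :=
  ∑ a : Fin c, ζ ^ ((a : ℕ) * k) • P a

variable {ζ : ℂ} {P : Fin c → Matrix n n ℂ}

theorem star_pinchingUnitary (hP1 : ∀ a, (P a)ᴴ = P a) (k : Fin c) :
    star (pinchingUnitary ζ P k) = ∑ a : Fin c, star (ζ ^ ((a : ℕ) * k)) • P a := by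
  simp [pinchingUnitary, star_eq_conjTranspose, hP1]

theorem pinchingUnitary_zero [DecidableEq n] [NeZero c] (hPsum : ∑ a, P a = 1) :
    pinchingUnitary ζ P 0 = 1 := by
  simp [pinchingUnitary, hPsum]

theorem pinchingUnitary_mem_unitaryGroup [Fintype n] [DecidableEq n] (hζ : ‖ζ‖ = 1)
    (hP1 : ∀ a, (P a)ᴴ = P a) (hP2 : ∀ a, P a * P a = P a) (hPsum : ∑ a, P a = 1) (k : Fin c) :
    pinchingUnitary ζ P k ∈ unitaryGroup n ℂ := by
  rw [mem_unitaryGroup_iff', star_pinchingUnitary hP1, ← mul_one (∑ a, _ • P a),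
    pinchingUnitary, sum_smul_mul_mul_sum_smul]
  conv_rhs => rw [← hPsum]
  refine Finset.sum_congr rfl fun a _ => ?_
  rw [Finset.sum_eq_single a (fun b _ hba => by
    rw [mul_one, mul_eq_zero_of_sum_eq_one hP1 hP2 hPsum hba.symm, smul_zero]) (by simp)]
  rw [Complex.star_def, Complex.conj_mul', norm_pow, hζ]
  simp [hP2]

theorem sum_pinchingUnitary_mul_mul_star [Fintype n] (hζ : IsPrimitiveRoot ζ c)
    (hP1 : ∀ a, (P a)ᴴ = P a) (X : Matrix n n ℂ) :
    ∑ k, pinchingUnitary ζ P k * X * star (pinchingUnitary ζ P k) =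
      (c : ℂ) • ∑ a, P a * X * P a := by
  simp only [star_pinchingUnitary hP1]
  simp only [pinchingUnitary, sum_smul_mul_mul_sum_smul]
  rw [Finset.sum_comm]
  simp only [Finset.smul_sum]
  refine Finset.sum_congr rfl fun a _ => ?_
  rw [Finset.sum_comm]
  simp only [← Finset.sum_smul, hζ.sum_pow_mul_star_pow, ite_smul, zero_smul, Finset.sum_ite_eq,
    mem_univ, if_true]

theorem smul_pinching_sub_smul_eq_sum_erase_zero [Fintype n] [DecidableEq n] [NeZero c]
    (hζ : IsPrimitiveRoot ζ c) (hP1 : ∀ a, (P a)ᴴ = P a) (hPsum : ∑ a, P a = 1)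
    (X : Matrix n n ℂ) :
    ((c : ℂ) / ((c : ℂ) - 1)) • (∑ a, P a * X * P a) - ((c : ℂ) - 1)⁻¹ • X =
      ∑ k ∈ univ.erase 0,
        ((c : ℝ) - 1)⁻¹ • (pinchingUnitary ζ P k * X * star (pinchingUnitary ζ P k)) := by
  rw [← Finset.smul_sum, Finset.sum_erase_eq_sub (mem_univ 0),
    sum_pinchingUnitary_mul_mul_star hζ hP1, pinchingUnitary_zero hPsum, star_one, mul_one,
    one_mul, RCLike.real_smul_eq_coe_smul (K := ℂ)]
  push_cast
  module

end Matrix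

theorem stmt_18_general {n c : ℕ} (hc : 2 ≤ c)
    (P : Fin c → Matrix (Fin n) (Fin n) ℂ)
    (hP1 : ∀ a : Fin c, (P a)ᴴ = P a)
    (hP2 : ∀ a : Fin c, P a * P a = P a)
    (hPsum : ∑ a : Fin c, P a = 1)
    (X : Matrix (Fin n) (Fin n) ℂ) (hX : X.IsHermitian)
    (Y : Matrix (Fin n) (Fin n) ℂ)
    (hYdef : Y = ((c : ℂ) / ((c : ℂ) - 1)) • (∑ a : Fin c, P a * X * P a) -
      (((c : ℂ) - 1))⁻¹ • X)
    (hY : Y.IsHermitian)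
    (μ ν : Fin n → ℝ)
    (hμa : Antitone μ) (hμ : ∃ e : Equiv.Perm (Fin n), μ = hX.eigenvalues ∘ e)
    (hν : ∃ e : Equiv.Perm (Fin n), ν = hY.eigenvalues ∘ e)
    (m : ℕ) (hm1 : 1 ≤ m) (hmn : m ≤ n) :
    (∑ i ∈ Finset.univ.filter (fun i : Fin n => (i : ℕ) < m), μ i) ≥
      (∑ i ∈ Finset.univ.filter (fun i : Fin n => (i : ℕ) < m), ν i) := by
  have : NeZero c := ⟨by omega⟩
  have hζ := Complex.isPrimitiveRoot_exp c (NeZero.ne c)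
  have hc1 : (1 : ℝ) < c := by exact_mod_cast hc
  refine sum_filter_lt_le_of_eq_sum_smul_unitary_conj hX hY hμa hμ hν hm1 hmn (univ.erase 0)
    (fun _ => ((c : ℝ) - 1)⁻¹) (fun _ _ => inv_nonneg.mpr (by linarith)) ?_ _
    (fun k _ => pinchingUnitary_mem_unitaryGroup
      (Complex.norm_eq_one_of_pow_eq_one hζ.pow_eq_one (NeZero.ne c)) hP1 hP2 hPsum k)
    (hYdef.trans (smul_pinching_sub_smul_eq_sum_erase_zero hζ hP1 hPsum X))
  rw [sum_const, card_erase_of_mem (mem_univ _), card_univ, Fintype.card_fin, nsmul_eq_mul,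
    Nat.cast_sub (by omega), Nat.cast_one, mul_inv_cancel₀ (by linarith)]

/-- Let `c ≥ 2`, let `P_1, …, P_c ∈ ℂ^{n×n}` be orthogonal projectors with `Σ_a P_a = I`, and
let `𝒞(X) = Σ_a P_a X P_a` be the corresponding pinching.  Then for every Hermitian
`X ∈ ℂ^{n×n}` and every `1 ≤ m ≤ n`:
`Σ_{i=1}^m λ_i↓(X) ≥ Σ_{i=1}^m λ_i↓((c/(c-1))·𝒞(X) - (1/(c-1))·X)`.
Here `μ` (resp. `ν`) is the non-increasing enumeration of the eigenvalues of `X`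
(resp. of `(c/(c-1))·𝒞(X) - (1/(c-1))·X`). -/
theorem stmt_18 {n c : ℕ} (hc : 2 ≤ c)
    (P : Fin c → Matrix (Fin n) (Fin n) ℂ)
    (hP1 : ∀ a : Fin c, (P a)ᴴ = P a)
    (hP2 : ∀ a : Fin c, P a * P a = P a)
    (hPsum : ∑ a : Fin c, P a = 1)
    (X : Matrix (Fin n) (Fin n) ℂ) (hX : X.IsHermitian)
    (Y : Matrix (Fin n) (Fin n) ℂ)
    (hYdef : Y = ((c : ℂ) / ((c : ℂ) - 1)) • (∑ a : Fin c, P a * X * P a) -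
      (((c : ℂ) - 1))⁻¹ • X)
    (hY : Y.IsHermitian)
    (μ ν : Fin n → ℝ)
    (hμa : Antitone μ) (hμ : ∃ e : Equiv.Perm (Fin n), μ = hX.eigenvalues ∘ e)
    (hνa : Antitone ν) (hν : ∃ e : Equiv.Perm (Fin n), ν = hY.eigenvalues ∘ e)
    (m : ℕ) (hm1 : 1 ≤ m) (hmn : m ≤ n) :
    (∑ i ∈ Finset.univ.filter (fun i : Fin n => (i : ℕ) < m), μ i) ≥
      (∑ i ∈ Finset.univ.filter (fun i : Fin n => (i : ℕ) < m), ν i) :=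
  stmt_18_general hc P hP1 hP2 hPsum X hX Y hYdef hY μ ν hμa hμ hν m hm1 hmn
end

section
/- Let G be a finite simple graph on n vertices with at least one edge and chromatic number χ. Then δ_1 ≤ (χ − 1)·(2θ_1 − δ_1); equivalently, χ ≥ 1 + δ_1/(2θ_1 − δ_1). Moreover, the chain of inequalities 1 + μ_1/(μ_1 − δ_1 + θ_1) ≥ 1 + δ_1/(2θ_1 − δ_1) ≥ 1 + δ_1/(2n − δ_1) ≥ 1 + μ_1/(n − μ_1) holds (using δ_1 ≥ 2μ_1 and θ_1 ≤ n). -/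
/-!
The coloring bound is a convexity argument. If `θ₁` is the largest Laplacian eigenvalue, the
form `q(z) = θ₁‖z‖² - zᵀLz` is positive semidefinite, so `q(∑ xₖ) ≤ χ ∑ q(xₖ)` for any `χ`
vectors. Split a unit top eigenvector `y` of `Q` along the colour classes of a proper
`χ`-colouring into `x₁, …, x_χ`: the adjacency form vanishes on each `xₖ`, so the inequality reads
`yᵀAy ≤ (χ - 1)(θ₁ - yᵀDy)`, which together with `yᵀAy ≤ yᵀDy` gives `χ δ₁ ≤ 2(χ - 1) θ₁`.

The chain of bounds then only needs the classical comparisons `θ₁ ≤ δ₁`, `2μ₁ ≤ δ₁` (replace a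
top eigenvector by its entrywise absolute value), `θ₁ ≤ n`, `μ₁ ≤ Δ < n` and `δ₁ ≤ Δ + μ₁ < θ₁ + μ₁`,
where `Δ` is the maximum degree.
-/

open Matrix Finset

lemma Antitone.isGreatest_range_of_comp_perm {α : Type*} [Preorder α] {n : ℕ} (hn : 0 < n)
    {f g : Fin n → α} (hf : Antitone f) (h : ∃ e : Equiv.Perm (Fin n), f = g ∘ e) :
    IsGreatest (Set.range g) (f ⟨0, hn⟩) := by
  obtain ⟨e, rfl⟩ := h
  refine ⟨⟨e ⟨0, hn⟩, rfl⟩, ?_⟩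
  rintro _ ⟨i, rfl⟩
  simpa using hf (show (⟨0, hn⟩ : Fin n) ≤ e.symm i from Nat.zero_le _)

lemma LinearMap.BilinForm.sum_sum_apply_sub_sub {ι R M : Type*} [Fintype ι] [CommRing R]
    [AddCommGroup M] [Module R M] (B : LinearMap.BilinForm R M) (x : ι → M) :
    ∑ i, ∑ j, B (x i - x j) (x i - x j) =
      2 * Fintype.card ι * ∑ i, B (x i) (x i) - 2 * B (∑ i, x i) (∑ i, x i) := by
  simp only [map_sub, LinearMap.sub_apply, map_sum, LinearMap.sum_apply, sum_sub_distrib,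
    sum_const, card_univ, nsmul_eq_mul, ← mul_sum]
  rw [sum_comm (f := fun i j => B (x j) (x i))]
  ring

lemma abs_dotProduct_abs_self {n : Type*} [Fintype n] (x : n → ℝ) : |x| ⬝ᵥ |x| = x ⬝ᵥ x := by
  simp only [dotProduct, Pi.abs_apply, abs_mul_abs_self]

namespace Matrix

variable {n : Type*} [Fintype n]

lemma PosSemidef.sum_dotProduct_mulVec_sum_le {ι : Type*} [Fintype ι] {A : Matrix n n ℝ}
    (hA : A.PosSemidef) (x : ι → n → ℝ) :
    (∑ i, x i) ⬝ᵥ (A *ᵥ ∑ i, x i) ≤ Fintype.card ι * ∑ i, x i ⬝ᵥ (A *ᵥ x i) := by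
  classical
  have h := LinearMap.BilinForm.sum_sum_apply_sub_sub (toLinearMap₂' ℝ A) x
  simp only [toLinearMap₂'_apply'] at h
  have h0 : 0 ≤ ∑ i, ∑ j, (x i - x j) ⬝ᵥ (A *ᵥ (x i - x j)) :=
    sum_nonneg fun i _ => sum_nonneg fun j _ => by
      simpa using hA.dotProduct_mulVec_nonneg (x i - x j)
  linarith

lemma abs_dotProduct_mulVec_le {A : Matrix n n ℝ} (hA : ∀ i j, 0 ≤ A i j) (x : n → ℝ) :
    |x ⬝ᵥ (A *ᵥ x)| ≤ |x| ⬝ᵥ (A *ᵥ |x|) := by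
  classical
  simp only [← toLinearMap₂'_apply', toLinearMap₂'_apply, Pi.abs_apply]
  refine (abs_sum_le_sum_abs _ _).trans (sum_le_sum fun i _ => ?_)
  refine (abs_sum_le_sum_abs _ _).trans (le_of_eq (sum_congr rfl fun j _ => ?_))
  simp only [smul_eq_mul, abs_mul, abs_of_nonneg (hA i j)]

variable [DecidableEq n]

lemma IsHermitian.posSemidef_smul_one_sub {A : Matrix n n ℝ} (hA : A.IsHermitian) {c : ℝ}
    (hc : c ∈ upperBounds (Set.range hA.eigenvalues)) : (c • 1 - A).PosSemidef := by
  have hdiag : diagonal (fun i => c - hA.eigenvalues i) =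
      c • 1 - diagonal (RCLike.ofReal ∘ hA.eigenvalues) := by
    ext i j; by_cases h : i = j <;> simp [h]
  have h : c • (1 : Matrix n n ℝ) - A = Unitary.conjStarAlgAut ℝ _ hA.eigenvectorUnitary
      (diagonal fun i => c - hA.eigenvalues i) := by
    rw [hdiag, map_sub, map_smul, map_one, ← hA.spectral_theorem]
  rw [h, Unitary.conjStarAlgAut_apply, Unitary.isUnit_coe.posSemidef_star_right_conjugate_iff,
    posSemidef_diagonal_iff]
  exact fun i => sub_nonneg.2 (hc ⟨i, rfl⟩)

lemma IsHermitian.dotProduct_mulVec_le {A : Matrix n n ℝ} (hA : A.IsHermitian) {c : ℝ}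
    (hc : c ∈ upperBounds (Set.range hA.eigenvalues)) (x : n → ℝ) :
    x ⬝ᵥ (A *ᵥ x) ≤ c * (x ⬝ᵥ x) := by
  have := (hA.posSemidef_smul_one_sub hc).dotProduct_mulVec_nonneg x
  simpa [sub_mulVec, smul_mulVec, dotProduct_sub, dotProduct_smul] using this

lemma IsHermitian.exists_dotProduct_mulVec_eq_eigenvalues {A : Matrix n n ℝ} (hA : A.IsHermitian)
    (i : n) : ∃ y : n → ℝ, y ⬝ᵥ y = 1 ∧ y ⬝ᵥ (A *ᵥ y) = hA.eigenvalues i := by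
  refine ⟨hA.eigenvectorBasis i, ?_, by simpa using (hA.eigenvalues_eq i).symm⟩
  have h : inner ℝ (hA.eigenvectorBasis i) (hA.eigenvectorBasis i) = 1 := by
    rw [real_inner_self_eq_norm_sq, hA.eigenvectorBasis.orthonormal.1 i, one_pow]
  rwa [EuclideanSpace.inner_eq_star_dotProduct, star_trivial] at h

end Matrix

namespace SimpleGraph

variable {V : Type*} (G : SimpleGraph V) [DecidableRel G.Adj]

lemma adjMatrix_apply_nonneg (i j : V) : 0 ≤ G.adjMatrix ℝ i j := by
  by_cases h : G.Adj i j <;> simp [h]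

variable [Fintype V] [DecidableEq V]

lemma dotProduct_mulVec_adjMatrix_le_degMatrix (x : V → ℝ) :
    x ⬝ᵥ (G.adjMatrix ℝ *ᵥ x) ≤ x ⬝ᵥ (G.degMatrix ℝ *ᵥ x) := by
  have := (G.posSemidef_lapMatrix ℝ).dotProduct_mulVec_nonneg x
  simpa [lapMatrix, sub_mulVec, dotProduct_sub] using this

lemma dotProduct_mulVec_degMatrix_le_maxDegree (x : V → ℝ) :
    x ⬝ᵥ (G.degMatrix ℝ *ᵥ x) ≤ G.maxDegree * (x ⬝ᵥ x) := by
  rw [dotProduct_mulVec_degMatrix, dotProduct, mul_sum]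
  refine sum_le_sum fun i _ => ?_
  rw [mul_assoc]
  exact mul_le_mul_of_nonneg_right (by exact_mod_cast G.degree_le_maxDegree i) (mul_self_nonneg _)

lemma abs_dotProduct_mulVec_degMatrix_abs (x : V → ℝ) :
    |x| ⬝ᵥ (G.degMatrix ℝ *ᵥ |x|) = x ⬝ᵥ (G.degMatrix ℝ *ᵥ x) := by
  simp only [dotProduct_mulVec_degMatrix, Pi.abs_apply, mul_assoc, abs_mul_abs_self]

lemma two_mul_dotProduct_mulVec_adjMatrix_le (x : V → ℝ) :
    2 * (x ⬝ᵥ (G.adjMatrix ℝ *ᵥ x)) ≤ |x| ⬝ᵥ ((G.degMatrix ℝ + G.adjMatrix ℝ) *ᵥ |x|) := by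
  have habs := (abs_le.1 (abs_dotProduct_mulVec_le G.adjMatrix_apply_nonneg x)).2
  have := G.dotProduct_mulVec_adjMatrix_le_degMatrix |x|
  rw [add_mulVec, dotProduct_add]
  linarith

lemma dotProduct_mulVec_lapMatrix_le (x : V → ℝ) :
    x ⬝ᵥ (G.lapMatrix ℝ *ᵥ x) ≤ |x| ⬝ᵥ ((G.degMatrix ℝ + G.adjMatrix ℝ) *ᵥ |x|) := by
  have habs := (abs_le.1 (abs_dotProduct_mulVec_le G.adjMatrix_apply_nonneg x)).1
  rw [lapMatrix, sub_mulVec, dotProduct_sub, add_mulVec, dotProduct_add,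
    abs_dotProduct_mulVec_degMatrix_abs]
  linarith

lemma dotProduct_mulVec_lapMatrix_le_card (x : V → ℝ) :
    x ⬝ᵥ (G.lapMatrix ℝ *ᵥ x) ≤ Fintype.card V * (x ⬝ᵥ x) := by
  have h := LinearMap.BilinForm.sum_sum_apply_sub_sub (LinearMap.mul ℝ ℝ) x
  simp only [LinearMap.mul_apply'] at h
  have hadj : (∑ i, ∑ j, if G.Adj i j then (x i - x j) ^ 2 else 0) ≤
      ∑ i, ∑ j, (x i - x j) * (x i - x j) :=
    sum_le_sum fun i _ => sum_le_sum fun j _ => by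
      split_ifs
      · rw [sq]
      · exact mul_self_nonneg _
  rw [← toLinearMap₂'_apply', lapMatrix_toLinearMap₂', dotProduct]
  nlinarith [mul_self_nonneg (∑ i, x i)]

-- The test vector `Δ eᵥ - eᵤ` has Rayleigh quotient `Δ + (Δ + deg u) / (Δ² + 1)` for `Δ = deg v`.
lemma degree_lt_of_posSemidef_smul_one_sub_lapMatrix {v u : V} (h : G.Adj v u) {c : ℝ}
    (hc : (c • 1 - G.lapMatrix ℝ).PosSemidef) : (G.degree v : ℝ) < c := by
  set M := c • 1 - G.lapMatrix ℝ
  have hvv : M v v = c - G.degree v := by simp [M, lapMatrix, degMatrix]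
  have huu : M u u = c - G.degree u := by simp [M, lapMatrix, degMatrix]
  have hvu : M v u = 1 := by simp [M, lapMatrix, degMatrix, h, G.ne_of_adj h]
  have huv : M u v = 1 := by simp [M, lapMatrix, degMatrix, h.symm, (G.ne_of_adj h).symm]
  have hz := hc.dotProduct_mulVec_nonneg ((G.degree v : ℝ) • Pi.single v 1 - Pi.single u 1)
  simp only [star_trivial, mulVec_sub, mulVec_smul, mulVec_single, MulOpposite.op_one, one_smul,
    dotProduct_sub, dotProduct_smul, sub_dotProduct, smul_dotProduct, single_dotProduct, col_apply,
    hvv, huu, hvu, huv, one_mul, mul_one, smul_eq_mul] at hz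
  have hu : (0 : ℝ) < G.degree u := by
    exact_mod_cast (G.degree_pos_iff_exists_adj u).2 ⟨v, h.symm⟩
  nlinarith [sq_nonneg (G.degree v : ℝ)]

lemma maxDegree_lt_of_posSemidef_smul_one_sub_lapMatrix {v w : V} (h : G.Adj v w) {c : ℝ}
    (hc : (c • 1 - G.lapMatrix ℝ).PosSemidef) : (G.maxDegree : ℝ) < c := by
  have : Nonempty V := ⟨v⟩
  obtain ⟨u, hu⟩ := G.exists_maximal_degree_vertex
  have hdeg : 0 < G.degree u :=
    hu ▸ ((G.degree_pos_iff_exists_adj v).2 ⟨w, h⟩).trans_le (G.degree_le_maxDegree v)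
  obtain ⟨u', hu'⟩ := (G.degree_pos_iff_exists_adj u).1 hdeg
  exact hu ▸ G.degree_lt_of_posSemidef_smul_one_sub_lapMatrix hu' hc

lemma dotProduct_mulVec_adjMatrix_le_of_coloring {α : Type*} [Fintype α] (C : G.Coloring α)
    {c : ℝ} (hc : (c • 1 - G.lapMatrix ℝ).PosSemidef) (y : V → ℝ) :
    y ⬝ᵥ (G.adjMatrix ℝ *ᵥ y) ≤
      (Fintype.card α - 1) * (c * (y ⬝ᵥ y) - y ⬝ᵥ (G.degMatrix ℝ *ᵥ y)) := by
  classical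
  set E := c • (1 : Matrix V V ℝ) - G.degMatrix ℝ with hE
  have hEdiag : E = diagonal fun u => c - G.degree u := by
    ext i j; by_cases h : i = j <;> simp [E, degMatrix, h]
  have hEy : y ⬝ᵥ (E *ᵥ y) = c * (y ⬝ᵥ y) - y ⬝ᵥ (G.degMatrix ℝ *ᵥ y) := by
    simp [E, sub_mulVec, dotProduct_sub, smul_mulVec]
  set x : α → V → ℝ := fun k u => if C u = k then y u else 0
  have hsum : ∑ k, x k = y := by ext u; simp [x, Finset.sum_apply]
  have hEx : ∑ k, x k ⬝ᵥ (E *ᵥ x k) = y ⬝ᵥ (E *ᵥ y) := by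
    simp only [hEdiag, dotProduct, mulVec_diagonal, x]
    rw [sum_comm]
    simp
  have hAx : ∀ k, x k ⬝ᵥ (G.adjMatrix ℝ *ᵥ x k) = 0 := fun k => by
    rw [dotProduct_mulVec_adjMatrix]
    refine sum_eq_zero fun i _ => sum_eq_zero fun j _ => ?_
    split_ifs with hij
    · obtain hi | hj :=
        not_and_or.1 fun hk : C i = k ∧ C j = k => C.valid hij (hk.1.trans hk.2.symm)
      · simp [x, hi]
      · simp [x, hj]
    · rfl
  have key := hc.sum_dotProduct_mulVec_sum_le x
  rw [hsum, show c • 1 - G.lapMatrix ℝ = E + G.adjMatrix ℝ by rw [lapMatrix, hE]; abel] at key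
  simp only [add_mulVec, dotProduct_add, hAx, add_zero, hEx] at key
  rw [← hEy]
  linarith

lemma card_mul_dotProduct_mulVec_degMatrix_add_adjMatrix_le_of_coloring {α : Type*} [Fintype α]
    (C : G.Coloring α) (hα : 2 ≤ Fintype.card α) {c : ℝ}
    (hc : (c • 1 - G.lapMatrix ℝ).PosSemidef) {y : V → ℝ} (hy : y ⬝ᵥ y = 1) :
    Fintype.card α * (y ⬝ᵥ ((G.degMatrix ℝ + G.adjMatrix ℝ) *ᵥ y)) ≤
      2 * (Fintype.card α - 1) * c := by
  have hcol := G.dotProduct_mulVec_adjMatrix_le_of_coloring C hc y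
  have hAD := G.dotProduct_mulVec_adjMatrix_le_degMatrix y
  have hα' : (2 : ℝ) ≤ Fintype.card α := by exact_mod_cast hα
  rw [hy, mul_one] at hcol
  rw [add_mulVec, dotProduct_add]
  nlinarith [mul_le_mul_of_nonneg_left hAD (sub_nonneg.2 hα')]

lemma eigenvalues_lapMatrix_le (hL : (G.lapMatrix ℝ).IsHermitian)
    (hQ : (G.degMatrix ℝ + G.adjMatrix ℝ).IsHermitian) {d : ℝ}
    (hd : d ∈ upperBounds (Set.range hQ.eigenvalues)) (i : V) : hL.eigenvalues i ≤ d := by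
  obtain ⟨y, hy, hyL⟩ := hL.exists_dotProduct_mulVec_eq_eigenvalues i
  have := hQ.dotProduct_mulVec_le hd |y|
  rw [abs_dotProduct_abs_self, hy, mul_one] at this
  linarith [G.dotProduct_mulVec_lapMatrix_le y]

lemma two_mul_eigenvalues_adjMatrix_le (hA : (G.adjMatrix ℝ).IsHermitian)
    (hQ : (G.degMatrix ℝ + G.adjMatrix ℝ).IsHermitian) {d : ℝ}
    (hd : d ∈ upperBounds (Set.range hQ.eigenvalues)) (i : V) : 2 * hA.eigenvalues i ≤ d := by
  obtain ⟨y, hy, hyA⟩ := hA.exists_dotProduct_mulVec_eq_eigenvalues i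
  have := hQ.dotProduct_mulVec_le hd |y|
  rw [abs_dotProduct_abs_self, hy, mul_one] at this
  linarith [G.two_mul_dotProduct_mulVec_adjMatrix_le y]

lemma eigenvalues_lapMatrix_le_card (hL : (G.lapMatrix ℝ).IsHermitian) (i : V) :
    hL.eigenvalues i ≤ Fintype.card V := by
  obtain ⟨y, hy, hyL⟩ := hL.exists_dotProduct_mulVec_eq_eigenvalues i
  simpa [hy, hyL] using G.dotProduct_mulVec_lapMatrix_le_card y

lemma eigenvalues_adjMatrix_le_maxDegree (hA : (G.adjMatrix ℝ).IsHermitian) (i : V) :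
    hA.eigenvalues i ≤ G.maxDegree := by
  obtain ⟨y, hy, hyA⟩ := hA.exists_dotProduct_mulVec_eq_eigenvalues i
  have := G.dotProduct_mulVec_degMatrix_le_maxDegree y
  rw [hy, mul_one] at this
  linarith [G.dotProduct_mulVec_adjMatrix_le_degMatrix y]

lemma eigenvalues_degMatrix_add_adjMatrix_le (hA : (G.adjMatrix ℝ).IsHermitian)
    (hQ : (G.degMatrix ℝ + G.adjMatrix ℝ).IsHermitian) {a : ℝ}
    (ha : a ∈ upperBounds (Set.range hA.eigenvalues)) (i : V) :
    hQ.eigenvalues i ≤ G.maxDegree + a := by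
  obtain ⟨y, hy, hyQ⟩ := hQ.exists_dotProduct_mulVec_eq_eigenvalues i
  have hD := G.dotProduct_mulVec_degMatrix_le_maxDegree y
  have hA' := hA.dotProduct_mulVec_le ha y
  rw [hy, mul_one] at hD hA'
  rw [← hyQ, add_mulVec, dotProduct_add]
  linarith

lemma card_mul_eigenvalues_degMatrix_add_adjMatrix_le_of_coloring
    (hQ : (G.degMatrix ℝ + G.adjMatrix ℝ).IsHermitian) {α : Type*} [Fintype α]
    (C : G.Coloring α) (hα : 2 ≤ Fintype.card α) {c : ℝ}
    (hc : (c • 1 - G.lapMatrix ℝ).PosSemidef) (i : V) :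
    Fintype.card α * hQ.eigenvalues i ≤ 2 * (Fintype.card α - 1) * c := by
  obtain ⟨y, hy, hyQ⟩ := hQ.exists_dotProduct_mulVec_eq_eigenvalues i
  rw [← hyQ]
  exact G.card_mul_dotProduct_mulVec_degMatrix_add_adjMatrix_le_of_coloring C hα hc hy

end SimpleGraph

lemma chromatic_bounds_of_spectral_le {χ a t d N : ℝ}
    (hcol : χ * d ≤ 2 * (χ - 1) * t) (ht : 0 < t) (htd : t ≤ d) (had : 2 * a ≤ d)
    (hdat : d < a + t) (htN : t ≤ N) (haN : a < N) :
    d ≤ (χ - 1) * (2 * t - d) ∧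
    χ ≥ 1 + d / (2 * t - d) ∧
    1 + a / (a - d + t) ≥ 1 + d / (2 * t - d) ∧
    1 + d / (2 * t - d) ≥ 1 + d / (2 * N - d) ∧
    1 + d / (2 * N - d) ≥ 1 + a / (N - a) := by
  have hd2t : 0 < 2 * t - d := by linarith
  have hmain : d ≤ (χ - 1) * (2 * t - d) := by linarith
  refine ⟨hmain, ?_, ?_, ?_, ?_⟩
  · linarith [(div_le_iff₀ hd2t).2 hmain]
  · gcongr 1 + ?_
    rw [div_le_div_iff₀ hd2t (by linarith)]
    nlinarith [mul_nonneg (sub_nonneg.2 had) (sub_nonneg.2 htd)]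
  · gcongr 1 + ?_
    exact div_le_div_of_nonneg_left (by linarith) hd2t (by linarith)
  · gcongr 1 + ?_
    rw [div_le_div_iff₀ (sub_pos.2 haN) (by linarith)]
    nlinarith

/-- For a finite simple graph `G` on `n` vertices with at least one edge and chromatic number
`χ`: `δ_1 ≤ (χ - 1)·(2θ_1 - δ_1)`; equivalently `χ ≥ 1 + δ_1/(2θ_1 - δ_1)`.  Moreover the
chain of inequalities
`1 + μ_1/(μ_1 - δ_1 + θ_1) ≥ 1 + δ_1/(2θ_1 - δ_1) ≥ 1 + δ_1/(2n - δ_1) ≥ 1 + μ_1/(n - μ_1)`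
holds.  Here `μ`, `θ`, `δ` are the non-increasing enumerations of the eigenvalues of the
adjacency matrix, the Laplacian `L = D - A` and the signless Laplacian `Q = D + A`. -/
theorem stmt_19 {n : ℕ} (hn : 0 < n) (G : SimpleGraph (Fin n)) [DecidableRel G.Adj]
    (he : ∃ v w : Fin n, G.Adj v w)
    (χ : ℕ) (hχ : G.chromaticNumber = (χ : ℕ∞))
    (hA : (G.adjMatrix ℝ).IsHermitian)
    (hL : (G.lapMatrix ℝ).IsHermitian)
    (hQ : (G.degMatrix ℝ + G.adjMatrix ℝ).IsHermitian)
    (μ θ δ : Fin n → ℝ)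
    (hμa : Antitone μ) (hμ : ∃ e : Equiv.Perm (Fin n), μ = hA.eigenvalues ∘ e)
    (hθa : Antitone θ) (hθ : ∃ e : Equiv.Perm (Fin n), θ = hL.eigenvalues ∘ e)
    (hδa : Antitone δ) (hδ : ∃ e : Equiv.Perm (Fin n), δ = hQ.eigenvalues ∘ e) :
    δ ⟨0, hn⟩ ≤ ((χ : ℝ) - 1) * (2 * θ ⟨0, hn⟩ - δ ⟨0, hn⟩) ∧
    (χ : ℝ) ≥ 1 + δ ⟨0, hn⟩ / (2 * θ ⟨0, hn⟩ - δ ⟨0, hn⟩) ∧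
    1 + μ ⟨0, hn⟩ / (μ ⟨0, hn⟩ - δ ⟨0, hn⟩ + θ ⟨0, hn⟩) ≥
      1 + δ ⟨0, hn⟩ / (2 * θ ⟨0, hn⟩ - δ ⟨0, hn⟩) ∧
    1 + δ ⟨0, hn⟩ / (2 * θ ⟨0, hn⟩ - δ ⟨0, hn⟩) ≥
      1 + δ ⟨0, hn⟩ / (2 * (n : ℝ) - δ ⟨0, hn⟩) ∧
    1 + δ ⟨0, hn⟩ / (2 * (n : ℝ) - δ ⟨0, hn⟩) ≥
      1 + μ ⟨0, hn⟩ / ((n : ℝ) - μ ⟨0, hn⟩) := by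
  obtain ⟨v, w, hvw⟩ := he
  obtain ⟨⟨i, hi⟩, hμ⟩ := hμa.isGreatest_range_of_comp_perm hn hμ
  obtain ⟨⟨j, hj⟩, hθ⟩ := hθa.isGreatest_range_of_comp_perm hn hθ
  obtain ⟨⟨k, hk⟩, hδ⟩ := hδa.isGreatest_range_of_comp_perm hn hδ
  have hθ₁ := hL.posSemidef_smul_one_sub hθ
  obtain ⟨C⟩ := G.chromaticNumber_le_iff_colorable.1 hχ.le
  have hχ₂ : 2 ≤ χ := by exact_mod_cast hχ ▸ G.two_le_chromaticNumber_of_adj hvw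
  have hΔθ := G.maxDegree_lt_of_posSemidef_smul_one_sub_lapMatrix hvw hθ₁
  have hΔn : (G.maxDegree : ℝ) < n := by
    have : Nonempty (Fin n) := ⟨v⟩
    exact_mod_cast Fintype.card_fin n ▸ G.maxDegree_lt_card_verts
  refine chromatic_bounds_of_spectral_le ?_ ((Nat.cast_nonneg _).trans_lt hΔθ) ?_ ?_ ?_ ?_ ?_
  · simpa [hk] using
      G.card_mul_eigenvalues_degMatrix_add_adjMatrix_le_of_coloring hQ C (by simpa) hθ₁ k
  · exact hj ▸ G.eigenvalues_lapMatrix_le hL hQ hδ j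
  · exact hi ▸ G.two_mul_eigenvalues_adjMatrix_le hA hQ hδ i
  · linarith [hk ▸ G.eigenvalues_degMatrix_add_adjMatrix_le hA hQ hμ k]
  · simpa [hj] using G.eigenvalues_lapMatrix_le_card hL j
  · linarith [hi ▸ G.eigenvalues_adjMatrix_le_maxDegree hA i]
end
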